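/- If two real algebraic plane curves Γ and Z in ℝ² (zero sets of nonzero polynomials) have finite intersection, then the number of intersection points is at most deg(Γ)·deg(Z). -/

import Mathlib

open Finset Function Module

/-!
If `f` and `g` are coprime, count dimensions in the spaces `V t` of polynomials of degree `≤ t`,
where `2 dim V t = (t + 1) (t + 2)`. Let `N` be the number of common zeros, `m = deg f`,
`n = deg g` and `d = N + m + n`. Products of linear forms interpolate on the `N` points, so the
polynomials in `V d` vanishing there have codimension `N`. They contain the image of
`(a, b) ↦ a f + b g` on `V (N + n) × V (N + m)`, whose kernel is `{(g c, -f c) | c ∈ V N}` by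
coprimality. Comparing dimensions gives `N ≤ m n`.

Otherwise `f = h f₁` and `g = h g₁` with `h` non-constant, and we induct on `deg f + deg g`. The
zero set of `h` is finite, so its complement in `ℝ²` is connected and `h` has constant sign. Every
zero of `h` is then an extremum, hence a zero of `∂h/∂y`, and induction applied to `h` and
`∂h/∂y` bounds the zeros of `h` by `deg h (deg h - 1)`; if `∂h/∂y = 0`, the zero set of `h` is a
union of vertical lines, hence empty.
-/

theorem Finset.Nat.two_mul_card_biUnion_antidiagonal (t : ℕ) :
    2 * #((range (t + 1)).biUnion antidiagonal) = (t + 1) * (t + 2) := by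
  have hdisj : (range (t + 1) : Set ℕ).PairwiseDisjoint antidiagonal :=
    fun a _ b _ hab => disjoint_left.2 fun x ha hb =>
      hab ((mem_antidiagonal.1 ha).symm.trans (mem_antidiagonal.1 hb))
  rw [card_biUnion hdisj]
  simp only [Finset.Nat.card_antidiagonal]
  have := sum_range_id_mul_two (t + 2)
  rw [sum_range_succ', add_zero] at this
  rw [mul_comm, this, show t + 2 - 1 = t + 1 from rfl, mul_comm]

theorem LinearMap.finrank_add_finrank_le_of_comp_eq_zero {K A B C D : Type*} [Field K]
    [AddCommGroup A] [Module K A] [FiniteDimensional K A]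
    [AddCommGroup B] [Module K B] [FiniteDimensional K B]
    [AddCommGroup C] [Module K C] [AddCommGroup D] [Module K D] [FiniteDimensional K D]
    (ψ : D →ₗ[K] A) (φ : A →ₗ[K] B) (χ : B →ₗ[K] C) (hχ : Surjective χ)
    (hcomp : χ ∘ₗ φ = 0) (hker : ker φ ≤ range ψ) :
    finrank K A + finrank K C ≤ finrank K B + finrank K D := by
  have hrange : range φ ≤ ker χ := LinearMap.range_le_ker_iff.2 hcomp
  have hA := φ.finrank_range_add_finrank_ker
  have hB := χ.finrank_range_add_finrank_ker
  rw [range_eq_top.2 hχ, finrank_top] at hB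
  have h1 := Submodule.finrank_mono hrange
  have h2 := (Submodule.finrank_mono hker).trans ψ.finrank_range_le
  omega

theorem exists_eq_mul_of_mul_add_mul_eq_zero {R : Type*} [CommRing R] [IsDomain R]
    [DecompositionMonoid R] {f g a b : R} (hfg : IsRelPrime f g) (hg : g ≠ 0)
    (h : a * f + b * g = 0) : ∃ c, a = g * c ∧ b = -(f * c) := by
  obtain ⟨c, rfl⟩ : g ∣ a := hfg.symm.dvd_of_dvd_mul_right ⟨-b, by linear_combination h⟩
  refine ⟨c, rfl, ?_⟩
  have : g * (b + f * c) = 0 := by linear_combination h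
  linear_combination (mul_eq_zero.1 this).resolve_left hg

theorem Continuous.forall_nonneg_or_forall_nonpos_of_countable {E : Type*}
    [NormedAddCommGroup E] [NormedSpace ℝ E] (hE : 1 < Module.rank ℝ E) {φ : E → ℝ}
    (hφ : Continuous φ) (hzero : {x | φ x = 0}.Countable) : (∀ x, 0 ≤ φ x) ∨ ∀ x, φ x ≤ 0 := by
  by_contra! ⟨⟨u, hu⟩, ⟨v, hv⟩⟩
  have hconn := (hzero.isPathConnected_compl_of_one_lt_rank hE).isConnected.isPreconnected
  obtain ⟨x, hx, hx0⟩ := hconn.intermediate_value₂ (a := u) (b := v) hu.ne hv.ne'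
    hφ.continuousOn continuousOn_const hu.le hv.le
  exact hx hx0

namespace MvPolynomial

section Degree

variable {σ R : Type*} [CommSemiring R]

theorem totalDegree_pderiv_le (i : σ) (p : MvPolynomial σ R) :
    (pderiv i p).totalDegree ≤ p.totalDegree - 1 := by
  refine Finset.sup_le fun s hs => ?_
  have hcoeff : coeff (s + Finsupp.single i 1) p ≠ 0 := by
    rw [mem_support_iff, coeff_pderiv] at hs
    exact left_ne_zero_of_mul hs
  have := le_totalDegree (mem_support_iff.2 hcoeff)
  rw [Finsupp.sum_add_index' (fun _ => rfl) (fun _ _ _ => rfl), Finsupp.sum_single_index rfl]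
    at this
  omega

theorem mul_mem_restrictTotalDegree {a b : ℕ} {f p : MvPolynomial σ R}
    (hp : p ∈ restrictTotalDegree σ R a) (h : a + f.totalDegree ≤ b) :
    f * p ∈ restrictTotalDegree σ R b := by
  rw [mem_restrictTotalDegree] at hp ⊢
  exact (totalDegree_mul f p).trans (by omega)

noncomputable def mulLeftRestrictTotalDegree (f : MvPolynomial σ R) {a b : ℕ}
    (h : a + f.totalDegree ≤ b) : restrictTotalDegree σ R a →ₗ[R] restrictTotalDegree σ R b :=
  (LinearMap.mulLeft R f).restrict fun _ hp => mul_mem_restrictTotalDegree hp h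

@[simp]
theorem coe_mulLeftRestrictTotalDegree_apply (f : MvPolynomial σ R) {a b : ℕ}
    (h : a + f.totalDegree ≤ b) (p : restrictTotalDegree σ R a) :
    (mulLeftRestrictTotalDegree f h p : MvPolynomial σ R) = f * p :=
  rfl

end Degree

section Field

variable {σ K : Type*} [Field K]

theorem totalDegree_pos_of_not_isUnit {p : MvPolynomial σ K}
    (hp : p ≠ 0) (hu : ¬IsUnit p) : 0 < p.totalDegree := by
  refine Nat.pos_of_ne_zero fun h => hu ?_
  rw [totalDegree_eq_zero_iff_eq_C] at h
  rw [h] at hp ⊢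
  exact (isUnit_iff_ne_zero.2 fun h0 => hp (by rw [h0, C_0])).map C

variable (K) in
theorem two_mul_finrank_restrictTotalDegree_fin_two (t : ℕ) :
    2 * finrank K (restrictTotalDegree (Fin 2) K t) = (t + 1) * (t + 2) := by
  let e : (Fin 2 →₀ ℕ) ≃ ℕ × ℕ := Finsupp.equivFunOnFinite.trans (piFinTwoEquiv fun _ => ℕ)
  have hmem (n : Fin 2 →₀ ℕ) :
      (n.sum fun _ k => k) ≤ t ↔ e n ∈ (range (t + 1)).biUnion antidiagonal := by
    simp [e, Finsupp.sum_fintype, Fin.sum_univ_two]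
  unfold restrictTotalDegree
  rw [finrank_eq_nat_card_basis (basisRestrictSupport K _),
    Set.coe_ofPred, Nat.card_congr (e.subtypeEquiv hmem), Nat.card_eq_finsetCard,
    Finset.Nat.two_mul_card_biUnion_antidiagonal]

theorem exists_totalDegree_le_one_eval_ne_zero_eval_eq_zero {p q : σ → K} (h : p ≠ q) :
    ∃ ℓ : MvPolynomial σ K, ℓ.totalDegree ≤ 1 ∧ eval p ℓ ≠ 0 ∧ eval q ℓ = 0 := by
  obtain ⟨i, hi⟩ := Function.ne_iff.1 h
  refine ⟨X i - C (q i), ?_, by simpa [sub_eq_zero] using hi, by simp⟩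
  exact (totalDegree_sub _ _).trans (by simp)

theorem exists_totalDegree_lt_card_eval_eq_ite [DecidableEq (σ → K)] {S : Finset (σ → K)}
    {p : σ → K} (hp : p ∈ S) :
    ∃ P : MvPolynomial σ K, P.totalDegree < #S ∧ ∀ q ∈ S, eval q P = if q = p then 1 else 0 := by
  have hsep : ∀ q ∈ S.erase p, ∃ ℓ : MvPolynomial σ K,
      ℓ.totalDegree ≤ 1 ∧ eval p ℓ ≠ 0 ∧ eval q ℓ = 0 :=
    fun q hq => exists_totalDegree_le_one_eval_ne_zero_eval_eq_zero (ne_of_mem_erase hq).symm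
  choose! ℓ hℓ using hsep
  set Q := ∏ q ∈ S.erase p, ℓ q
  have hQp : eval p Q ≠ 0 := by
    simpa [Q, map_prod] using prod_ne_zero_iff.2 fun q hq => (hℓ q hq).2.1
  have hQdeg : Q.totalDegree < #S := calc
    Q.totalDegree ≤ ∑ q ∈ S.erase p, (ℓ q).totalDegree := totalDegree_finsetProd _ _
    _ ≤ #(S.erase p) := by simpa using sum_le_sum fun q hq => (hℓ q hq).1
    _ < #S := card_erase_lt_of_mem hp
  refine ⟨C (eval p Q)⁻¹ * Q, (totalDegree_mul _ _).trans_lt (by simpa using hQdeg), ?_⟩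
  intro q hq
  split_ifs with hqp
  · simp [hqp, hQp]
  · have : eval q Q = 0 := by
      have hq' : q ∈ S.erase p := mem_erase.2 ⟨hqp, hq⟩
      simpa [Q, map_prod] using prod_eq_zero hq' (hℓ q hq').2.2
    simp [this]

noncomputable def evalOn (S : Finset (σ → K)) : MvPolynomial σ K →ₗ[K] S → K :=
  LinearMap.pi fun s => (aeval (s : σ → K)).toLinearMap

@[simp]
theorem evalOn_apply (S : Finset (σ → K)) (P : MvPolynomial σ K) (s : S) :
    evalOn S P s = eval (s : σ → K) P := by
  simp [evalOn, aeval_eq_eval]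

theorem surjective_evalOn_comp_subtype {S : Finset (σ → K)} {d : ℕ} (hS : #S ≤ d + 1) :
    Surjective (evalOn S ∘ₗ (restrictTotalDegree σ K d).subtype) := by
  classical
  have hbasis : ∀ p : S, ∃ P ∈ restrictTotalDegree σ K d,
      ∀ q ∈ S, eval q P = if q = p then 1 else 0 := fun p =>
    let ⟨P, hdeg, hP⟩ := exists_totalDegree_lt_card_eval_eq_ite p.2
    ⟨P, (mem_restrictTotalDegree _ _ _).2 (by omega), hP⟩
  choose P hPmem hP using hbasis
  intro w
  refine ⟨∑ p, w p • ⟨P p, hPmem p⟩, ?_⟩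
  ext q
  simp only [LinearMap.comp_apply, Submodule.subtype_apply, map_sum, map_smul, Finset.sum_apply,
    Pi.smul_apply, evalOn_apply]
  rw [Fintype.sum_eq_single q fun p hpq => by simp [hP p q q.2, Subtype.coe_ne_coe.2 hpq.symm]]
  simp [hP q q q.2]

theorem card_le_totalDegree_mul_of_isRelPrime {f g : MvPolynomial (Fin 2) K}
    (hfg : IsRelPrime f g) (hg : g ≠ 0) {S : Finset (Fin 2 → K)}
    (hS : ∀ x ∈ S, eval x f = 0 ∧ eval x g = 0) :
    #S ≤ f.totalDegree * g.totalDegree := by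
  set m := f.totalDegree
  set n := g.totalDegree
  set N := #S
  let φ := (mulLeftRestrictTotalDegree f (a := N + n) (b := N + m + n) (by omega)).coprod
    (mulLeftRestrictTotalDegree g (a := N + m) (by omega))
  let ψ := (mulLeftRestrictTotalDegree g (a := N) (b := N + n) (by omega)).prod
    (-mulLeftRestrictTotalDegree f (a := N) (b := N + m) (by omega))
  have hcomp : evalOn S ∘ₗ (restrictTotalDegree _ K (N + m + n)).subtype ∘ₗ φ = 0 := by
    refine LinearMap.ext fun ab => ?_
    ext s
    simp [φ, (hS s s.2).1, (hS s s.2).2]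
  have hker : LinearMap.ker φ ≤ LinearMap.range ψ := by
    rintro ⟨a, b⟩ hab
    have hab' : (a : MvPolynomial (Fin 2) K) * f + b * g = 0 := by
      simpa [φ, mul_comm, Subtype.ext_iff] using hab
    obtain ⟨c, hac, hbc⟩ := exists_eq_mul_of_mul_add_mul_eq_zero hfg hg hab'
    have hc : c ∈ restrictTotalDegree _ K N := by
      rcases eq_or_ne c 0 with rfl | hc0
      · exact zero_mem _
      have ha := (mem_restrictTotalDegree _ _ _).1 a.2
      rw [hac, totalDegree_mul_of_isDomain hg hc0] at ha
      exact (mem_restrictTotalDegree _ _ _).2 (by omega)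
    exact ⟨⟨c, hc⟩, by ext <;> simp [ψ, hac, hbc]⟩
  have key := LinearMap.finrank_add_finrank_le_of_comp_eq_zero ψ φ _
    (surjective_evalOn_comp_subtype (by omega)) hcomp hker
  rw [finrank_prod, finrank_fintype_fun_eq_card, Fintype.card_coe] at key
  have hd := two_mul_finrank_restrictTotalDegree_fin_two K (N + m + n)
  have hn := two_mul_finrank_restrictTotalDegree_fin_two K (N + n)
  have hm := two_mul_finrank_restrictTotalDegree_fin_two K (N + m)
  have hN := two_mul_finrank_restrictTotalDegree_fin_two K N
  nlinarith

end Field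

section Real

variable {σ : Type*}

def zeroSet {R : Type*} [CommSemiring R] (p : MvPolynomial σ R) : Set (σ → R) :=
  {x | eval x p = 0}

theorem zeroSet_mul {R : Type*} [CommRing R] [NoZeroDivisors R] (p q : MvPolynomial σ R) :
    zeroSet (p * q) = zeroSet p ∪ zeroSet q := by
  ext x
  simp [zeroSet]

variable [DecidableEq σ]

theorem hasDerivAt_eval_update (p : MvPolynomial σ ℝ) (x : σ → ℝ) (i : σ) (t : ℝ) :
    HasDerivAt (fun s => eval (update x i s) p) (eval (update x i t) (pderiv i p)) t := by
  induction p using MvPolynomial.induction_on with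
  | C a => simpa using hasDerivAt_const t a
  | add p q hp hq =>
    simp only [map_add]
    exact hp.add hq
  | mul_X p j hp =>
    have hj : HasDerivAt (fun s => update x i s j) ((Pi.single i 1 : σ → ℝ) j) t := by
      rcases eq_or_ne j i with rfl | hji
      · simpa using hasDerivAt_id' t
      · simpa [hji] using hasDerivAt_const t (x j)
    have hprod : HasDerivAt (fun s => eval (update x i s) p * update x i s j)
        (eval (update x i t) (pderiv i p) * update x i t j +
          eval (update x i t) p * (Pi.single i 1 : σ → ℝ) j) t :=
      hp.mul hj
    simp only [map_mul, eval_X]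
    refine hprod.congr_deriv ?_
    rcases eq_or_ne j i with rfl | hji
    · simp only [pderiv_mul, pderiv_X_self, map_add, map_mul, eval_X, update_self,
        Pi.single_eq_same, mul_one]
    · simp only [pderiv_mul, pderiv_X_of_ne hji, map_add, map_mul, map_zero, eval_X,
        update_of_ne hji, Pi.single_eq_of_ne hji]

theorem eval_update_eq_of_pderiv_eq_zero {p : MvPolynomial σ ℝ} {i : σ} (hp : pderiv i p = 0)
    (x : σ → ℝ) (t : ℝ) : eval (update x i t) p = eval x p := by
  have hderiv (s : ℝ) := hasDerivAt_eval_update p x i s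
  simp only [hp, map_zero] at hderiv
  simpa using is_const_of_deriv_eq_zero (fun s => (hderiv s).differentiableAt)
    (fun s => (hderiv s).deriv) t (x i)

theorem eval_pderiv_eq_zero_of_isLocalExtr {p : MvPolynomial σ ℝ} {x : σ → ℝ}
    (hx : IsLocalExtr (fun y => eval y p) x) (i : σ) : eval x (pderiv i p) = 0 := by
  have hline : IsLocalExtr (fun s => eval (update x i s) p) (x i) := by
    refine IsLocalExtr.comp_continuous (f := fun y => eval y p) (g := update x i) ?_
      (continuous_const.update i continuous_id).continuousAt
    simpa using hx
  simpa using hline.hasDerivAt_eq_zero (hasDerivAt_eval_update p x i (x i))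

theorem zeroSet_subset_zeroSet_pderiv [Fintype σ] (hσ : 1 < Fintype.card σ)
    {p : MvPolynomial σ ℝ} (hp : (zeroSet p).Countable) (i : σ) :
    zeroSet p ⊆ zeroSet (pderiv i p) := by
  intro x (hx : eval x p = 0)
  have hrank : 1 < Module.rank ℝ (σ → ℝ) := by simpa [rank_fun'] using hσ
  refine eval_pderiv_eq_zero_of_isLocalExtr ?_ i
  rcases (continuous_eval p).forall_nonneg_or_forall_nonpos_of_countable hrank hp with h | h
  · exact Or.inl (Filter.Eventually.of_forall fun y => by simpa [hx] using h y)
  · exact Or.inr (Filter.Eventually.of_forall fun y => by simpa [hx] using h y)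

theorem zeroSet_eq_empty_of_pderiv_eq_zero {p : MvPolynomial σ ℝ} (hp : (zeroSet p).Finite)
    {i : σ} (hi : pderiv i p = 0) : zeroSet p = ∅ := by
  refine Set.eq_empty_of_forall_notMem fun x hx => Set.not_infinite.2 hp ?_
  refine Set.infinite_of_injective_forall_mem (update_injective x i) fun t => ?_
  show eval (update x i t) p = 0
  rwa [eval_update_eq_of_pderiv_eq_zero hi]

theorem ncard_zeroSet_inter_le {f g : MvPolynomial (Fin 2) ℝ} (hf : f ≠ 0) (hg : g ≠ 0)
    (hfin : (zeroSet f ∩ zeroSet g).Finite) :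
    (zeroSet f ∩ zeroSet g).ncard ≤ f.totalDegree * g.totalDegree := by
  induction hD : f.totalDegree + g.totalDegree using Nat.strong_induction_on generalizing f g
    with | _ D IH => ?_
  by_cases hfg : IsRelPrime f g
  · rw [Set.ncard_eq_toFinset_card _ hfin]
    exact card_le_totalDegree_mul_of_isRelPrime hfg hg fun x hx => by simpa [zeroSet] using hx
  simp only [IsRelPrime, not_forall] at hfg
  obtain ⟨h, ⟨f₁, rfl⟩, ⟨g₁, rfl⟩, hu⟩ := hfg
  have hh := left_ne_zero_of_mul hf
  have hf₁ := right_ne_zero_of_mul hf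
  have hg₁ := right_ne_zero_of_mul hg
  have hk := totalDegree_pos_of_not_isUnit hh hu
  rw [totalDegree_mul_of_isDomain hh hf₁, totalDegree_mul_of_isDomain hh hg₁] at hD ⊢
  rw [zeroSet_mul, zeroSet_mul, ← Set.union_inter_distrib_left] at hfin ⊢
  have hZh : (zeroSet h).ncard ≤ h.totalDegree * (h.totalDegree - 1) := by
    have hfinh : (zeroSet h).Finite := hfin.subset Set.subset_union_left
    by_cases hd : pderiv 1 h = 0
    · simp [zeroSet_eq_empty_of_pderiv_eq_zero hfinh hd]
    have hdeg := totalDegree_pderiv_le 1 h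
    rw [← Set.inter_eq_left.2 (zeroSet_subset_zeroSet_pderiv (by simp) hfinh.countable 1)]
    calc _ ≤ h.totalDegree * (pderiv 1 h).totalDegree :=
          IH _ (by omega) hh hd (hfinh.subset Set.inter_subset_left) rfl
      _ ≤ _ := Nat.mul_le_mul_left _ hdeg
  have hZ₁ := IH _ (by omega) hf₁ hg₁ (hfin.subset Set.subset_union_right) rfl
  calc _ ≤ (zeroSet h).ncard + (zeroSet f₁ ∩ zeroSet g₁).ncard := Set.ncard_union_le _ _
    _ ≤ h.totalDegree * (h.totalDegree - 1) + f₁.totalDegree * g₁.totalDegree :=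
        add_le_add hZh hZ₁
    _ ≤ _ := by
        have := Nat.mul_le_mul_left h.totalDegree (Nat.sub_le h.totalDegree 1)
        nlinarith

end Real

end MvPolynomial

/-- Bézout-type bound: if two real algebraic plane curves `Γ = Z(f)` and `Z = Z(g)`
(zero sets of nonzero polynomials `f, g : ℝ[x,y]`) have finite intersection, then the
number of intersection points is at most `deg f * deg g`. -/
theorem bezout_plane_curves
    (f g : MvPolynomial (Fin 2) ℝ) (hf : f ≠ 0) (hg : g ≠ 0)
    (Γ Z : Set (Fin 2 → ℝ))
    (hΓ : Γ = {x | MvPolynomial.eval x f = 0})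
    (hZ : Z = {x | MvPolynomial.eval x g = 0})
    (hfin : (Γ ∩ Z).Finite) :
    (Γ ∩ Z).ncard ≤ f.totalDegree * g.totalDegree := by
  subst hΓ hZ
  exact MvPolynomial.ncard_zeroSet_inter_le hf hg hfin
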